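/- arXiv:2107.06759 — 2 statements merged into one kernel-verified Lean document; each statement's English description precedes it below -/
import Mathlib

section
/- Let (A, λ_A) be an object of C_𝒪. Then there is an isomorphism of Ψ_A-modules I_A/I_A² ≅ I_A ⊗_𝒪 Ψ_A, where Ψ_A := 𝒪/λ_A(I_A). -/
open IsLocalRing CategoryTheory

noncomputable section

/-- The length of a module, defined as the Krull dimension of its lattice of submodules. -/
noncomputable def mLength (R M : Type) [Ring R] [AddCommGroup M] [Module R M] :
    WithBot ℕ∞ :=
  Order.krullDim (Submodule R M)

/-- The depth of a module over a local ring: the supremum of the lengths of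
regular sequences on `M` consisting of elements of the maximal ideal. -/
noncomputable def mDepth (A : Type) [CommRing A] [IsLocalRing A]
    (M : Type) [AddCommGroup M] [Module A M] : ℕ∞ :=
  sSup {n : ℕ∞ | ∃ rs : List A, (rs.length : ℕ∞) = n ∧
    (∀ x ∈ rs, x ∈ maximalIdeal A) ∧ RingTheory.Sequence.IsRegular M rs}

/-- The `𝒪`-module structure on an `A`-module killed by `ker lam`,
obtained through the isomorphism `A ⧸ ker lam ≃ 𝒪`. -/
noncomputable def oModule {𝒪 A : Type} [CommRing 𝒪] [CommRing A] (lam : A →+* 𝒪)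
    (hs : Function.Surjective lam) (M : Type) [AddCommGroup M] [Module A M]
    (h : Module.IsTorsionBySet A M (RingHom.ker lam : Set A)) : Module 𝒪 M :=
  letI := h.module
  Module.compHom M (RingHom.quotientKerEquivOfSurjective hs).symm.toRingHom

/-- The length over `𝒪` of an `A`-module killed by `ker lam`. -/
noncomputable def oLength {𝒪 A : Type} [CommRing 𝒪] [CommRing A] (lam : A →+* 𝒪)
    (hs : Function.Surjective lam) (M : Type) [AddCommGroup M] [Module A M]
    (h : Module.IsTorsionBySet A M (RingHom.ker lam : Set A)) : WithBot ℕ∞ :=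
  letI := oModule lam hs M h
  mLength 𝒪 M

/-- `M` has finite length as an `𝒪`-module. -/
def OFiniteLength {𝒪 A : Type} [CommRing 𝒪] [CommRing A] (lam : A →+* 𝒪)
    (hs : Function.Surjective lam) (M : Type) [AddCommGroup M] [Module A M]
    (h : Module.IsTorsionBySet A M (RingHom.ker lam : Set A)) : Prop :=
  letI := oModule lam hs M h
  IsFiniteLength 𝒪 M

/-- The rank over `𝒪` of an `A`-module killed by `ker lam`: the dimension over the
fraction field `K` of `𝒪` of the base change `K ⊗_𝒪 M`. -/
noncomputable def oRank {𝒪 A : Type} [CommRing 𝒪] [IsDomain 𝒪] [CommRing A] (lam : A →+* 𝒪)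
    (hs : Function.Surjective lam) (M : Type) [AddCommGroup M] [Module A M]
    (h : Module.IsTorsionBySet A M (RingHom.ker lam : Set A)) : Cardinal :=
  letI := oModule lam hs M h
  Module.rank (FractionRing 𝒪) (TensorProduct 𝒪 (FractionRing 𝒪) M)

lemma torsionBySet_torsion {A M : Type} [CommRing A] [AddCommGroup M] [Module A M]
    (s : Set A) : Module.IsTorsionBySet A (Submodule.torsionBySet A M s) s :=
  Submodule.torsionBySet_isTorsionBySet s

/-- The annihilator `A[J]` of an ideal `J` is killed by `J`. -/
lemma annihilator_torsion {A : Type} [CommRing A] (J : Ideal A) :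
    Module.IsTorsionBySet A (Submodule.annihilator J) (J : Set A) := by
  rintro ⟨x, hx⟩ ⟨a, ha⟩
  apply Subtype.ext
  have := (Submodule.mem_annihilator.mp hx) a ha
  simpa [smul_eq_mul, mul_comm] using this

lemma submodule_torsion {A M : Type} [CommRing A] [AddCommGroup M] [Module A M] {s : Set A}
    (h : Module.IsTorsionBySet A M s) (P : Submodule A M) :
    Module.IsTorsionBySet A P s := by
  rintro ⟨x, hx⟩ a
  apply Subtype.ext
  simpa using @h x a

lemma quotient_torsion {A M : Type} [CommRing A] [AddCommGroup M] [Module A M] {s : Set A}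
    (h : Module.IsTorsionBySet A M s) (P : Submodule A M) :
    Module.IsTorsionBySet A (M ⧸ P) s := by
  rintro x a
  obtain ⟨y, rfl⟩ := Submodule.Quotient.mk_surjective P x
  rw [← Submodule.Quotient.mk_smul, @h y a]
  rfl

lemma cotangent_torsion {A : Type} [CommRing A] {I : Ideal A} {s : Set A}
    (h : Module.IsTorsionBySet A I s) :
    Module.IsTorsionBySet A I.Cotangent s := by
  rintro x a
  obtain ⟨y, rfl⟩ := I.toCotangent_surjective x
  rw [← map_smul, @h y a, map_zero]

/-- The conormal module `I/I²` is killed by `I`. -/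
lemma conormal_torsion {A : Type} [CommRing A] (I : Ideal A) :
    Module.IsTorsionBySet A I.Cotangent (I : Set A) := by
  rintro x ⟨a, ha⟩
  obtain ⟨y, rfl⟩ := I.toCotangent_surjective x
  rw [← map_smul]
  refine (I.toCotangent_eq_zero _).mpr ?_
  have : ((a • y : I) : A) = a * (y : A) := rfl
  rw [this, pow_two]
  exact Ideal.mul_mem_mul ha y.2

/-- If `P` contains the `A[J]`-torsion of `M`, then `M ⧸ P` is killed by `J`;
in particular congruence modules `M/(M[𝔭] + M[I])` are killed by `𝔭`. -/
lemma quot_tors {A M : Type} [CommRing A] [AddCommGroup M] [Module A M] (J : Ideal A)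
    (P : Submodule A M)
    (hP : Submodule.torsionBySet A M ((Submodule.annihilator J : Ideal A) : Set A) ≤ P) :
    Module.IsTorsionBySet A (M ⧸ P) (J : Set A) := by
  rintro x ⟨a, ha⟩
  obtain ⟨y, rfl⟩ := Submodule.Quotient.mk_surjective P x
  rw [← Submodule.Quotient.mk_smul, Submodule.Quotient.mk_eq_zero]
  apply hP
  rw [Submodule.mem_torsionBySet_iff]
  rintro ⟨b, hb⟩
  have hba : b * a = 0 := (Submodule.mem_annihilator.mp hb) a ha
  calc b • a • y = (b * a) • y := (mul_smul b a y).symm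
  _ = 0 := by rw [hba, zero_smul]

/-- A commutative ring has finite self-injective dimension if `Ext^i(-, R)`
vanishes for all large `i`.  For a noetherian local ring this is
the Gorenstein condition. -/
def HasFiniteInjectiveDimension (A : Type) [CommRing A] : Prop :=
  ∃ n : ℕ, ∀ (M : ModuleCat A) (i : ℕ), n < i →
    Subsingleton (((Ext A (ModuleCat A) i).obj (Opposite.op M)).obj (ModuleCat.of A A))

/-- A noetherian local ring is regular if the dimension of its cotangent space
equals its Krull dimension. -/
def IsRegularLocal (R : Type) [CommRing R] [IsLocalRing R] [IsNoetherianRing R] : Prop :=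
  (Module.finrank (ResidueField R) (CotangentSpace R) : WithBot ℕ∞) = ringKrullDim R

/-- A noetherian local ring is a complete intersection if its completion at the
maximal ideal is isomorphic to a regular local ring modulo an ideal generated by a
regular sequence. -/
def IsCompleteIntersectionLocal (A : Type) [CommRing A] [IsLocalRing A] : Prop :=
  ∃ (R : Type) (_ : CommRing R) (_ : IsLocalRing R) (_ : IsNoetherianRing R) (rs : List R),
    IsRegularLocal R ∧ (∀ x ∈ rs, x ∈ maximalIdeal R) ∧
    RingTheory.Sequence.IsRegular R rs ∧
    Nonempty ((AdicCompletion (maximalIdeal A) A) ≃+* (R ⧸ Ideal.ofList rs))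

/-- The ideal `Γ_{𝔪}(A)` of elements killed by a power of the maximal ideal. -/
noncomputable def powerTorsionIdeal (A : Type) [CommRing A] [IsLocalRing A] : Ideal A :=
  ⨆ n : ℕ, Submodule.torsionBySet A A ((maximalIdeal A ^ n : Ideal A) : Set A)

end

/-!
The argument works for any ideal `I` of `A` on which `A` acts through a surjection `f : A ↠ S`
(here `I = A[𝔭_A]`, `S = 𝒪`). With `J = f(I)`, an element `a ∈ I` acts on `I` as `f a ∈ J`, so
the `A`-submodule `I • I = I²` of `I` is the `S`-submodule `J • I`, and
`I/I² = I/JI ≅ I ⊗_S S/J`.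
-/

section CotangentOverQuotient

variable {A S : Type} [CommRing A] [CommRing S] {f : A →+* S} (hf : Function.Surjective f)
  (I : Ideal A) [Module S I] [Module S I.Cotangent]
  (hI : ∀ (a : A) (m : I), f a • m = a • m) (hC : ∀ (a : A) (m : I.Cotangent), f a • m = a • m)

def toCotangentOfSurjective : I →ₗ[S] I.Cotangent where
  toFun := I.toCotangent
  map_add' := map_add _
  map_smul' c m := by
    obtain ⟨a, rfl⟩ := hf c
    rw [hI, map_smul, RingHom.id_apply, hC]

theorem ker_toCotangentOfSurjective :
    LinearMap.ker (toCotangentOfSurjective hf I hI hC) = I.map f • (⊤ : Submodule S I) := by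
  refine le_antisymm (fun m hm ↦ ?_) (Submodule.smul_le.mpr fun c hc m _ ↦ ?_)
  · have hm : m ∈ (I • ⊤ : Submodule A I) := by
      rwa [← Submodule.ker_mkQ (I • ⊤ : Submodule A I)]
    refine Submodule.smul_induction_on hm (fun a ha n _ ↦ ?_) fun _ _ ↦ add_mem
    rw [← hI]
    exact Submodule.smul_mem_smul (Ideal.mem_map_of_mem f ha) trivial
  · obtain ⟨a, ha, rfl⟩ := (Ideal.mem_map_iff_of_surjective f hf).mp hc
    rw [LinearMap.mem_ker, map_smul, hC]
    exact @conormal_torsion _ _ I _ ⟨a, ha⟩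

noncomputable def cotangentEquivTensorQuotMap :
    I.Cotangent ≃ₗ[S] TensorProduct S I (S ⧸ I.map f) :=
  let g := toCotangentOfSurjective hf I hI hC
  (g.quotKerEquivOfSurjective I.toCotangent_surjective).symm ≪≫ₗ
    Submodule.quotEquivOfEq _ _ (ker_toCotangentOfSurjective hf I hI hC) ≪≫ₗ
    (TensorProduct.tensorQuotEquivQuotSMul I (I.map f)).symm

end CotangentOverQuotient

theorem oModule_smul {𝒪 A : Type} [CommRing 𝒪] [CommRing A] (lam : A →+* 𝒪)
    (hs : Function.Surjective lam) (M : Type) [AddCommGroup M] [Module A M]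
    (h : Module.IsTorsionBySet A M (RingHom.ker lam : Set A)) (a : A) (m : M) :
    let := oModule lam hs M h
    lam a • m = a • m := by
  let := h.module
  have hsymm : (RingHom.quotientKerEquivOfSurjective hs).symm (lam a) =
      Ideal.Quotient.mk (RingHom.ker lam) a :=
    (RingHom.quotientKerEquivOfSurjective hs).symm_apply_eq.mpr rfl
  exact congrArg (· • m) hsymm

/-- The isomorphism is `𝒪`-linear, `I_A` being an `𝒪`-module since it is killed by
`𝔭_A = ker λ_A`; it is then automatically `Ψ_A`-linear. -/
theorem statement5_general
    (𝒪 : Type) [CommRing 𝒪]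
    (A : Type) [CommRing A]
    (lam : A →+* 𝒪) (hs : Function.Surjective lam) :
    letI : Module 𝒪 (Submodule.annihilator (RingHom.ker lam) : Ideal A) :=
      oModule lam hs _ (annihilator_torsion (RingHom.ker lam))
    letI : Module 𝒪 (Submodule.annihilator (RingHom.ker lam) : Ideal A).Cotangent :=
      oModule lam hs _ (cotangent_torsion (annihilator_torsion (RingHom.ker lam)))
    Nonempty ((Submodule.annihilator (RingHom.ker lam) : Ideal A).Cotangent ≃ₗ[𝒪]
      TensorProduct 𝒪 (Submodule.annihilator (RingHom.ker lam) : Ideal A)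
        (𝒪 ⧸ Ideal.map lam (Submodule.annihilator (RingHom.ker lam)))) := by
  let := oModule lam hs _ (annihilator_torsion (RingHom.ker lam))
  let := oModule lam hs _ (cotangent_torsion (annihilator_torsion (RingHom.ker lam)))
  exact ⟨cotangentEquivTensorQuotMap hs _ (oModule_smul lam hs _ _) (oModule_smul lam hs _ _)⟩

/-- For an object `(A, λ_A)` of `C_𝒪`, there is an isomorphism of
`Ψ_A`-modules `I_A/I_A² ≅ I_A ⊗_𝒪 Ψ_A`, where `Ψ_A = 𝒪/λ_A(I_A)`.  (Both sides are
modules over `Ψ_A`, a quotient of `𝒪`; the isomorphism is stated as an `𝒪`-linear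
isomorphism, `I_A` being an `𝒪`-module since it is killed by `𝔭_A = ker λ_A`.) -/
theorem statement5
    (𝒪 : Type) [CommRing 𝒪] [IsDomain 𝒪] [IsDiscreteValuationRing 𝒪]
    (A : Type) [CommRing A] [IsLocalRing A] [IsNoetherianRing A]
    (lam : A →+* 𝒪) (hs : Function.Surjective lam)
    (hfin : OFiniteLength lam hs (RingHom.ker lam).Cotangent
      (conormal_torsion (RingHom.ker lam))) :
    letI : Module 𝒪 (Submodule.annihilator (RingHom.ker lam) : Ideal A) :=
      oModule lam hs _ (annihilator_torsion (RingHom.ker lam))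
    letI : Module 𝒪 (Submodule.annihilator (RingHom.ker lam) : Ideal A).Cotangent :=
      oModule lam hs _ (cotangent_torsion (annihilator_torsion (RingHom.ker lam)))
    Nonempty ((Submodule.annihilator (RingHom.ker lam) : Ideal A).Cotangent ≃ₗ[𝒪]
      TensorProduct 𝒪 (Submodule.annihilator (RingHom.ker lam) : Ideal A)
        (𝒪 ⧸ Ideal.map lam (Submodule.annihilator (RingHom.ker lam)))) :=
  statement5_general 𝒪 A lam hs
end

section
/- Let (A, λ_A) be an object of C_𝒪 and M a finitely generated A-module with depth_A M ≥ 1. Then M[𝔭_A] and M/M[I_A] are free 𝒪-modules of the same finite rank, and the natural maps give an exact sequence of 𝒪-modules 0 → M[𝔭_A] → M/M[I_A] → Ψ_A(M) → 0. -/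
open IsLocalRing CategoryTheory

/-!
A regular element `x ∈ 𝔪_A` on `M` acts on `M[𝔭]` through `λ(x) ∈ 𝔪_𝒪`, and every nonzero
`c ∈ 𝒪` divides a power of `λ(x)`; hence `M[𝔭]` is `𝒪`-torsion-free. Since `Φ_A` has finite
length, some `b ∈ A` with `λ(b) ≠ 0` kills `𝔭/𝔭²`, and Cayley–Hamilton for multiplication by `b`
on `𝔭` yields `s ∈ I_A` with `λ(s) = λ(b)ⁿ ≠ 0`. Such an `s` is regular on `M[𝔭]`, so
`M[𝔭] → M/M[I_A]` is injective and multiplication by `s` embeds `M/M[I_A]` into `M[𝔭]`. Both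
modules are then finitely generated and torsion-free over the DVR `𝒪`, hence free, and the two
embeddings force equal ranks.
-/

section oModule

variable {𝒪 A M : Type} [CommRing 𝒪] [CommRing A] {lam : A →+* 𝒪} (hs : Function.Surjective lam)
  [AddCommGroup M] [Module A M] (h : Module.IsTorsionBySet A M (RingHom.ker lam : Set A))

lemma isScalarTower_oModule :
    letI := lam.toAlgebra; letI := oModule lam hs M h; IsScalarTower A 𝒪 M := by
  let _ := lam.toAlgebra
  let _ := oModule lam hs M h
  let _ := h.module
  refine .of_algebraMap_smul fun b x => ?_
  have hb : (RingHom.quotientKerEquivOfSurjective hs).symm (lam b) = Ideal.Quotient.mk _ b :=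
    (RingHom.quotientKerEquivOfSurjective hs).symm_apply_eq.mpr rfl
  change (RingHom.quotientKerEquivOfSurjective hs).symm (lam b) • x = b • x
  rw [hb]
  exact h.mk_smul b x

end oModule

lemma IsFiniteLength.annihilator_ne_bot {R N : Type*} [CommRing R] [IsDomain R] [AddCommGroup N]
    [Module R N] (hR : ¬ IsField R) (h : IsFiniteLength R N) : Module.annihilator R N ≠ ⊥ := by
  obtain ⟨_, _⟩ := isFiniteLength_iff_isNoetherian_isArtinian.mp h
  -- an element with zero annihilator would embed `R` into `N`, making `R` an artinian domain
  have htors : Module.IsTorsion R N := by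
    intro x
    by_contra! hx
    have hinj : Function.Injective (LinearMap.toSpanSingleton R N x) :=
      (injective_iff_map_eq_zero _).mpr fun r hr => by
        by_contra hr0
        exact hx ⟨r, mem_nonZeroDivisors_of_ne_zero hr0⟩ hr
    have : IsArtinianRing R := isArtinian_of_injective _ hinj
    exact hR (IsArtinianRing.isField_of_isDomain R)
  obtain ⟨c, hc, hc0⟩ := Submodule.annihilator_top_inter_nonZeroDivisors htors
  rw [Submodule.annihilator_top] at hc
  exact (Submodule.ne_bot_iff _).mpr ⟨c, hc, nonZeroDivisors.ne_zero hc0⟩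

lemma exists_dvd_pow_of_mem_maximalIdeal {R : Type*} [CommRing R] [IsDomain R]
    [IsDiscreteValuationRing R] {c y : R} (hc : c ≠ 0) (hy : y ∈ maximalIdeal R) :
    ∃ n : ℕ, c ∣ y ^ n := by
  obtain ⟨ϖ, hϖ⟩ := IsDiscreteValuationRing.exists_irreducible R
  obtain ⟨n, hn⟩ := IsDiscreteValuationRing.associated_pow_irreducible hc hϖ
  rw [hϖ.maximalIdeal_eq, Ideal.mem_span_singleton] at hy
  exact ⟨n, hn.dvd.trans (pow_dvd_pow_of_dvd hy n)⟩

lemma exists_mem_annihilator_sub_pow_mem {A : Type*} [CommRing A] {𝔭 : Ideal A} (hfg : 𝔭.FG)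
    {b : A} (hb : ∀ q ∈ 𝔭, b * q ∈ 𝔭 ^ 2) :
    ∃ s ∈ Submodule.annihilator 𝔭, ∃ n : ℕ, s - b ^ n ∈ 𝔭 := by
  have : Module.Finite A 𝔭 := Module.Finite.iff_fg.mpr hfg
  have hrange : LinearMap.range (algebraMap A (Module.End A 𝔭) b) ≤ 𝔭 • ⊤ := by
    rintro _ ⟨q, rfl⟩
    rw [Submodule.mem_smul_top_iff, Ideal.smul_eq_mul, ← pow_two]
    exact hb q q.2
  obtain ⟨p, hmonic, -, hcoeff, hp⟩ :=
    LinearMap.exists_monic_and_natDegree_eq_and_coeff_mem_pow_and_aeval_eq_zero A _ 𝔭 hrange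
  refine ⟨p.eval b, ?_, p.natDegree, ?_⟩
  · rw [Polynomial.aeval_algebraMap_apply_eq_algebraMap_eval] at hp
    rw [Submodule.mem_annihilator]
    intro q hq
    simpa using congr($hp ⟨q, hq⟩)
  · rw [Polynomial.eval_eq_sum_range, Finset.sum_range_succ, hmonic.coeff_natDegree, one_mul,
      add_sub_cancel_right]
    refine Ideal.sum_mem _ fun i hi => Ideal.mul_mem_right _ _ ?_
    exact Ideal.pow_le_self (Nat.sub_ne_zero_of_lt (Finset.mem_range.mp hi)) (hcoeff i)

lemma exists_mem_annihilator_ker_ne_zero {𝒪 A : Type} [CommRing 𝒪] [IsDomain 𝒪] [CommRing A]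
    [IsNoetherianRing A] (h𝒪 : ¬ IsField 𝒪) {lam : A →+* 𝒪} (hs : Function.Surjective lam)
    (hfin : OFiniteLength lam hs (RingHom.ker lam).Cotangent
      (conormal_torsion (RingHom.ker lam))) :
    ∃ s ∈ Submodule.annihilator (RingHom.ker lam), lam s ≠ 0 := by
  let _ := lam.toAlgebra
  let _ := oModule lam hs _ (conormal_torsion (RingHom.ker lam))
  have := isScalarTower_oModule hs (conormal_torsion (RingHom.ker lam))
  obtain ⟨c, hc, hc0⟩ := (Submodule.ne_bot_iff _).mp (IsFiniteLength.annihilator_ne_bot h𝒪 hfin)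
  obtain ⟨b, rfl⟩ := hs c
  have hb : ∀ q ∈ RingHom.ker lam, b * q ∈ RingHom.ker lam ^ 2 := fun q hq => by
    have : b • (RingHom.ker lam).toCotangent ⟨q, hq⟩ = 0 :=
      (algebraMap_smul 𝒪 b _).symm.trans (Module.mem_annihilator.mp hc _)
    rwa [← map_smul, Ideal.toCotangent_eq_zero] at this
  obtain ⟨s, hsI, n, hsn⟩ := exists_mem_annihilator_sub_pow_mem (IsNoetherian.noetherian _) hb
  refine ⟨s, hsI, ?_⟩
  rw [← sub_add_cancel s (b ^ n), map_add, RingHom.mem_ker.mp hsn, zero_add, map_pow]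
  exact pow_ne_zero n hc0

lemma exists_isSMulRegular_of_one_le_mDepth {A M : Type} [CommRing A] [IsLocalRing A]
    [AddCommGroup M] [Module A M] (h : 1 ≤ mDepth A M) :
    ∃ x ∈ maximalIdeal A, IsSMulRegular M x := by
  by_contra! hcon
  suffices mDepth A M ≤ 0 from absurd (h.trans this) (by simp)
  refine sSup_le ?_
  rintro _ ⟨rs, rfl, hmem, hreg⟩
  rcases rs with _ | ⟨x, tl⟩
  · simp
  · exact absurd ((RingTheory.Sequence.isRegular_cons_iff M x tl).mp hreg).1
      (hcon x (hmem x List.mem_cons_self))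

lemma isTorsionFree_of_isSMulRegular {𝒪 A N : Type*} [CommRing 𝒪] [IsDomain 𝒪]
    [IsDiscreteValuationRing 𝒪] [CommRing A] [Algebra A 𝒪] [AddCommGroup N] [Module A N]
    [Module 𝒪 N] [IsScalarTower A 𝒪 N] {x : A} (hx : algebraMap A 𝒪 x ∈ maximalIdeal 𝒪)
    (hreg : IsSMulRegular N x) : Module.IsTorsionFree 𝒪 N := by
  refine Module.isTorsionFree_iff_smul_eq_zero.mpr fun {c m} hcm =>
    or_iff_not_imp_left.mpr fun hc => ?_
  obtain ⟨n, d, hd⟩ := exists_dvd_pow_of_mem_maximalIdeal hc hx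
  refine (hreg.pow n).right_eq_zero_of_smul ?_
  rw [← algebraMap_smul 𝒪, map_pow, hd, mul_comm, mul_smul, hcm, smul_zero]

section torsionBySet

open Submodule

variable {A M : Type*} [CommRing A] [AddCommGroup M] [Module A M] {J : Ideal A} {s : A}

lemma smul_mem_torsionBySet_of_mem_annihilator (hs : s ∈ annihilator J) (m : M) :
    s • m ∈ torsionBySet A M J := by
  rw [mem_torsionBySet_iff]
  rintro ⟨a, ha⟩
  rw [smul_smul, mul_comm, ← smul_eq_mul, mem_annihilator.mp hs a ha, zero_smul]

lemma injective_mkQ_comp_subtype_torsionBySet (hs : s ∈ annihilator J)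
    (hreg : IsSMulRegular (torsionBySet A M J) s) :
    Function.Injective ((torsionBySet A M (annihilator J : Ideal A)).mkQ ∘ₗ
      (torsionBySet A M J).subtype) := by
  refine (injective_iff_map_eq_zero _).mpr fun _ hm => hreg.right_eq_zero_of_smul ?_
  rw [LinearMap.comp_apply, mkQ_apply, Quotient.mk_eq_zero, mem_torsionBySet_iff] at hm
  exact Subtype.ext (hm ⟨s, hs⟩)

def smulOfMemAnnihilator (hs : s ∈ annihilator J) :
    (M ⧸ torsionBySet A M (annihilator J : Ideal A)) →ₗ[A] torsionBySet A M J :=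
  (torsionBySet A M (annihilator J : Ideal A)).liftQ
    ((LinearMap.lsmul A M s).codRestrict _ (smul_mem_torsionBySet_of_mem_annihilator hs))
    fun _ hm => Subtype.ext ((mem_torsionBySet_iff _ _).mp hm ⟨s, hs⟩)

lemma smulOfMemAnnihilator_injective (hs : s ∈ annihilator J)
    (hreg : IsSMulRegular (torsionBySet A M J) s) :
    Function.Injective (smulOfMemAnnihilator (M := M) hs) := by
  refine (injective_iff_map_eq_zero _).mpr fun y hy => ?_
  obtain ⟨m, rfl⟩ := Submodule.Quotient.mk_surjective _ y
  have hsm : s • m = 0 := congr_arg Subtype.val hy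
  rw [Quotient.mk_eq_zero, mem_torsionBySet_iff]
  rintro ⟨i, hi⟩
  have hi' : (⟨i • m, smul_mem_torsionBySet_of_mem_annihilator hi m⟩ : torsionBySet A M J) = 0 :=
    hreg.right_eq_zero_of_smul (Subtype.ext (by simp [smul_comm s i, hsm]))
  exact congr_arg Subtype.val hi'

end torsionBySet

lemma range_mkQ_comp_subtype_eq_ker_factor {A M : Type*} [Ring A] [AddCommGroup M] [Module A M]
    (P Q : Submodule A M) :
    LinearMap.range (Q.mkQ ∘ₗ P.subtype) = LinearMap.ker (Submodule.factor le_sup_right :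
      M ⧸ Q →ₗ[A] M ⧸ (P ⊔ Q)) := by
  simp [LinearMap.range_comp, Submodule.ker_mapQ, Submodule.map_sup]

/-- Let `(A, λ_A)` be an object of `C_𝒪` and `M` a finitely generated
`A`-module with `depth_A M ≥ 1`.  Then `M[𝔭_A]` and `M/M[I_A]` are free `𝒪`-modules
of the same finite rank, and the natural maps form a short exact sequence
`0 → M[𝔭_A] → M/M[I_A] → Ψ_A(M) → 0`, where `Ψ_A(M) = M/(M[𝔭_A] + M[I_A])`. -/
theorem statement7
    (𝒪 : Type) [CommRing 𝒪] [IsDomain 𝒪] [IsDiscreteValuationRing 𝒪]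
    (A : Type) [CommRing A] [IsLocalRing A] [IsNoetherianRing A]
    (lam : A →+* 𝒪) (hs : Function.Surjective lam)
    (hfin : OFiniteLength lam hs (RingHom.ker lam).Cotangent
      (conormal_torsion (RingHom.ker lam)))
    (M : Type) [AddCommGroup M] [Module A M] [Module.Finite A M]
    (hdepth : 1 ≤ mDepth A M) :
    let Mp : Submodule A M := Submodule.torsionBySet A M (RingHom.ker lam)
    let MI : Submodule A M :=
      Submodule.torsionBySet A M (Submodule.annihilator (RingHom.ker lam) : Ideal A)
    letI : Module 𝒪 Mp := oModule lam hs _ (torsionBySet_torsion _)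
    letI : Module 𝒪 (M ⧸ MI) :=
      oModule lam hs _ (quot_tors (RingHom.ker lam) MI le_rfl)
    let f : Mp →ₗ[A] M ⧸ MI := MI.mkQ.comp Mp.subtype
    let g : (M ⧸ MI) →ₗ[A] M ⧸ (Mp ⊔ MI) :=
      Submodule.mapQ MI (Mp ⊔ MI) LinearMap.id (by simp)
    Module.Free 𝒪 Mp ∧ Module.Finite 𝒪 Mp ∧
    Module.Free 𝒪 (M ⧸ MI) ∧ Module.Finite 𝒪 (M ⧸ MI) ∧
    Module.rank 𝒪 Mp = Module.rank 𝒪 (M ⧸ MI) ∧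
    Function.Injective f ∧ Function.Surjective g ∧ LinearMap.range f = LinearMap.ker g := by
  intro Mp MI f g
  let _ := lam.toAlgebra
  let _ : Module 𝒪 Mp := oModule lam hs _ (torsionBySet_torsion _)
  let _ : Module 𝒪 (M ⧸ MI) := oModule lam hs _ (quot_tors (RingHom.ker lam) MI le_rfl)
  have := isScalarTower_oModule hs (torsionBySet_torsion (M := M) _)
  have := isScalarTower_oModule hs (quot_tors (RingHom.ker lam) MI le_rfl)
  obtain ⟨x, hxm, hx⟩ := exists_isSMulRegular_of_one_le_mDepth hdepth
  have : IsLocalHom lam := .of_surjective lam hs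
  have : Module.IsTorsionFree 𝒪 Mp :=
    isTorsionFree_of_isSMulRegular (map_nonunit lam x hxm) (hx.submodule Mp x)
  obtain ⟨s, hsI, hs0⟩ :=
    exists_mem_annihilator_ker_ne_zero (IsDiscreteValuationRing.not_isField 𝒪) hs hfin
  have hsreg : IsSMulRegular Mp s :=
    (isSMulRegular_algebraMap_iff 𝒪).mp (IsSMulRegular.of_ne_zero hs0)
  have hf : Function.Injective f := injective_mkQ_comp_subtype_torsionBySet hsI hsreg
  have hG := smulOfMemAnnihilator_injective (M := M) hsI hsreg
  let F := f.extendScalarsOfSurjective (S := 𝒪) hs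
  let G := (smulOfMemAnnihilator (M := M) hsI).extendScalarsOfSurjective (S := 𝒪) hs
  have : Module.IsTorsionFree 𝒪 (M ⧸ MI) := hG.moduleIsTorsionFree G (map_smul G)
  have : Module.Finite 𝒪 Mp := .of_restrictScalars_finite A 𝒪 Mp
  have : Module.Finite 𝒪 (M ⧸ MI) := .of_restrictScalars_finite A 𝒪 (M ⧸ MI)
  exact ⟨inferInstance, inferInstance, inferInstance, inferInstance,
    le_antisymm (F.rank_le_of_injective hf) (G.rank_le_of_injective hG), hf,
    Submodule.factor_surjective _, range_mkQ_comp_subtype_eq_ker_factor Mp MI⟩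
end
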